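/- arXiv:2404.10111 — 2 statements merged into one kernel-verified Lean document; each statement's English description precedes it below -/
import Mathlib

section
/- Let ℓ : ℝ × ℝ → ℝ≥0 be differentiable with gradient bounded by K and convex in its second argument, and let E(x_{1:n}) = min_{f ∈ F^T} (1/n) Σ_i ℓ(f(x_i), f*(x_i)) and Ê be the value returned by approximate optimization routines applied to the plug-in problem with estimate f̂* in place of f*, where the inner minimization routine has optimality gap at most δ and the outer maximization routine has optimality gap at most ν. Then |Ê − max_{x_{1:n}} E(x_{1:n})| ≤ (δ + ν) + 3K · sup_{x∈X} |f̂*(x) − f*(x)|. -/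
/-!
Replacing `fstar` by `fhat` moves every empirical risk by at most `K ε`, since `ℓ` is
`K`-Lipschitz in its second argument. Hence the population value of the inner routine's answer
at any `x` is at most `Ehat + ν + K ε`, which bounds `Epop` from above; and at `xt` every `f ∈ F`
has population risk at least `Ehat - δ - K ε`, so the infimum over `F` there, and with it
`Epop`, is at least that.
-/

open Finset

/-- `E = sup_x inf_{f ∈ F} R x f`, with neither extremum required to be attained. -/
def IsMaxMinValue {ι κ : Type*} (F : Set κ) (R : ι → κ → ℝ) (E : ℝ) : Prop :=
  IsLUB {v : ℝ | ∃ x, IsGLB {w : ℝ | ∃ f ∈ F, w = R x f} v} E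

section MaxMin

variable {ι κ : Type*} {F : Set κ} {R : ι → κ → ℝ} {E c : ℝ}

theorem IsMaxMinValue.le_of_forall_exists_le (hE : IsMaxMinValue F R E)
    (h : ∀ x, ∃ f ∈ F, R x f ≤ c) : E ≤ c := by
  refine hE.2 ?_
  rintro v ⟨x, hv⟩
  obtain ⟨f, hf, hle⟩ := h x
  exact (hv.1 ⟨f, hf, rfl⟩).trans hle

theorem IsMaxMinValue.le_of_forall_le (hE : IsMaxMinValue F R E) (hF : F.Nonempty) (x : ι)
    (h : ∀ f ∈ F, c ≤ R x f) : c ≤ E := by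
  set S := {w : ℝ | ∃ f ∈ F, w = R x f}
  have hc : c ∈ lowerBounds S := by
    rintro w ⟨f, hf, rfl⟩
    exact h f hf
  have hS : S.Nonempty := let ⟨f, hf⟩ := hF; ⟨R x f, f, hf, rfl⟩
  calc c ≤ sInf S := le_csInf hS hc
    _ ≤ E := hE.1 ⟨x, isGLB_csInf hS ⟨c, hc⟩⟩

end MaxMin

/-- `0 ≤ c` covers `n = 0`, where both sides are divided by `0` and hence `0`. -/
theorem abs_sum_div_sub_sum_div_le {n : ℕ} {g h : Fin n → ℝ} {c : ℝ} (hc : 0 ≤ c)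
    (hgh : ∀ i, |g i - h i| ≤ c) : |(∑ i, g i) / n - (∑ i, h i) / n| ≤ c := by
  rw [div_sub_div_same, ← sum_sub_distrib, abs_div, Nat.abs_cast]
  refine div_le_of_le_mul₀ n.cast_nonneg hc ?_
  calc |∑ i, (g i - h i)| ≤ ∑ i, |g i - h i| := abs_sum_le_sum_abs _ _
    _ ≤ (univ : Finset (Fin n)).card • c := sum_le_card_nsmul _ _ _ fun i _ => hgh i
    _ = c * n := by simp [mul_comm]

noncomputable def empiricalRisk {X : Type*} {n : ℕ} (ℓ : ℝ → ℝ → ℝ) (g : X → ℝ) (x : Fin n → X)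
    (f : X → ℝ) : ℝ :=
  (∑ i, ℓ (f (x i)) (g (x i))) / n

theorem abs_empiricalRisk_sub_le {X : Type*} {n : ℕ} {ℓ : ℝ → ℝ → ℝ} {K ε : ℝ} (hK : 0 ≤ K)
    (hε : 0 ≤ ε) (hLip : ∀ a b b', |ℓ a b - ℓ a b'| ≤ K * |b - b'|) {g g' : X → ℝ}
    (hgg' : ∀ x, |g' x - g x| ≤ ε) (x : Fin n → X) (f : X → ℝ) :
    |empiricalRisk ℓ g' x f - empiricalRisk ℓ g x f| ≤ K * ε :=
  abs_sum_div_sub_sum_div_le (mul_nonneg hK hε) fun _ =>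
    (hLip _ _ _).trans (mul_le_mul_of_nonneg_left (hgg' _) hK)

theorem stmt_2_general {X : Type*} [Nonempty X]
    (F : Set (X → ℝ)) (hF : F.Nonempty)
    (ℓ : ℝ → ℝ → ℝ) (K : ℝ) (hK : 0 ≤ K)
    (hLip2 : ∀ a b b', |ℓ a b - ℓ a b'| ≤ K * |b - b'|)
    (fstar fhat : X → ℝ) (ε : ℝ) (herr : ∀ x, |fhat x - fstar x| ≤ ε)
    (n : ℕ)
    (δ ν : ℝ) (hδ : 0 ≤ δ) (hν : 0 ≤ ν)
    -- the inner minimization routine and its approximate optimality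
    (ftil : (Fin n → X) → (X → ℝ))
    (hftilF : ∀ x, ftil x ∈ F)
    (hinner : ∀ (x : Fin n → X), ∀ f ∈ F,
      (∑ i, ℓ (ftil x (x i)) (fhat (x i))) / n ≤
        (∑ i, ℓ (f (x i)) (fhat (x i))) / n + δ)
    -- the outer maximization routine and its approximate optimality
    (xt : Fin n → X)
    (houter : ∀ x : Fin n → X,
      (∑ i, ℓ (ftil x (x i)) (fhat (x i))) / n ≤
        (∑ i, ℓ (ftil xt (xt i)) (fhat (xt i))) / n + ν)
    -- the plug-in value and the population max-min value
    (Ehat : ℝ) (hEhat : Ehat = (∑ i, ℓ (ftil xt (xt i)) (fhat (xt i))) / n)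
    (Epop : ℝ)
    (hEpop : IsLUB {v : ℝ | ∃ x : Fin n → X,
      IsGLB {w : ℝ | ∃ f ∈ F, w = (∑ i, ℓ (f (x i)) (fstar (x i))) / n} v} Epop) :
    |Ehat - Epop| ≤ (δ + ν) + 3 * K * ε := by
  have hε : 0 ≤ ε := (abs_nonneg _).trans (herr (Classical.arbitrary X))
  have hclose : ∀ (x : Fin n → X) f,
      |empiricalRisk ℓ fhat x f - empiricalRisk ℓ fstar x f| ≤ K * ε :=
    abs_empiricalRisk_sub_le hK hε hLip2 herr
  have hEpop' : IsMaxMinValue F (empiricalRisk ℓ fstar) Epop := hEpop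
  have hupper : Epop ≤ Ehat + ν + K * ε := by
    refine hEpop'.le_of_forall_exists_le fun x => ⟨ftil x, hftilF x, ?_⟩
    have hx : empiricalRisk ℓ fhat x (ftil x) ≤ Ehat + ν := hEhat ▸ houter x
    linarith [(abs_le.mp (hclose x (ftil x))).1]
  have hlower : Ehat - δ - K * ε ≤ Epop := by
    refine hEpop'.le_of_forall_le hF xt fun f hf => ?_
    have hf' : Ehat ≤ empiricalRisk ℓ fhat xt f + δ := hEhat ▸ hinner xt f hf
    linarith [(abs_le.mp (hclose xt f)).2]
  have hKε : 0 ≤ K * ε := mul_nonneg hK hε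
  rw [abs_sub_le_iff]
  constructor <;> linarith

/-- error bound for the plug-in max-min anomaly-generation program.
The value `Ehat` returned by approximate optimization routines (inner optimality gap
`δ`, outer optimality gap `ν`) applied to the plug-in problem with estimate `fhat`
differs from the population max-min value `Epop` by at most
`(δ + ν) + 3 K ε`, where `ε` bounds the sup-norm error of `fhat` for `fstar`. -/
theorem stmt_2 {X : Type*} [Nonempty X]
    (F : Set (X → ℝ)) (hF : F.Nonempty)
    (ℓ : ℝ → ℝ → ℝ) (K : ℝ) (hK : 0 ≤ K)
    (hnonneg : ∀ a b, 0 ≤ ℓ a b)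
    (hLip1 : ∀ a a' b, |ℓ a b - ℓ a' b| ≤ K * |a - a'|)
    (hLip2 : ∀ a b b', |ℓ a b - ℓ a b'| ≤ K * |b - b'|)
    (hconv : ∀ a, ConvexOn ℝ Set.univ (fun b => ℓ a b))
    (fstar fhat : X → ℝ) (ε : ℝ) (herr : ∀ x, |fhat x - fstar x| ≤ ε)
    (n : ℕ) (hn : 0 < n)
    (δ ν : ℝ) (hδ : 0 ≤ δ) (hν : 0 ≤ ν)
    -- the inner minimization routine and its approximate optimality
    (ftil : (Fin n → X) → (X → ℝ))
    (hftilF : ∀ x, ftil x ∈ F)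
    (hinner : ∀ (x : Fin n → X), ∀ f ∈ F,
      (∑ i, ℓ (ftil x (x i)) (fhat (x i))) / n ≤
        (∑ i, ℓ (f (x i)) (fhat (x i))) / n + δ)
    -- the outer maximization routine and its approximate optimality
    (xt : Fin n → X)
    (houter : ∀ x : Fin n → X,
      (∑ i, ℓ (ftil x (x i)) (fhat (x i))) / n ≤
        (∑ i, ℓ (ftil xt (xt i)) (fhat (xt i))) / n + ν)
    -- the plug-in value and the population max-min value
    (Ehat : ℝ) (hEhat : Ehat = (∑ i, ℓ (ftil xt (xt i)) (fhat (xt i))) / n)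
    (Epop : ℝ)
    (hEpop : IsLUB {v : ℝ | ∃ x : Fin n → X,
      IsGLB {w : ℝ | ∃ f ∈ F, w = (∑ i, ℓ (f (x i)) (fstar (x i))) / n} v} Epop) :
    |Ehat - Epop| ≤ (δ + ν) + 3 * K * ε :=
  stmt_2_general F hF ℓ K hK hLip2 fstar fhat ε herr n δ ν hδ hν ftil hftilF hinner xt houter Ehat
    hEhat Epop hEpop
end

section
/- (CPT with subcertainty can strictly prefer a dominated lottery) There exist a probability weighting parameter pair (δ, γ) with δ ∈ (0,1), γ ∈ (0,1), and two-payoff lotteries ℓ = (pays b with prob p, a with prob 1−p) and m = (pays b with prob q, a with prob 1−q) with 0 ≤ q < p ≤ 1 and a < b (so ℓ first-order stochastically dominates m), such that the CPT value of m strictly exceeds the CPT value of ℓ, where CPT value of a two-outcome lottery with probabilities (p₁, p₂) and payoffs (z₁, z₂) is Σ_j π_j(p;δ,γ) z_j with π_j(p;δ,γ) = δ p_j^γ / (δ p_j^γ + p_{3−j}^γ) (and π of a zero-probability outcome taken as 0). Concretely, this holds e.g. with δ = 0.726, γ = 0.309. -/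
/-- CPT value of a two-payoff lottery paying `b` with probability `p` and `a` with
probability `1 − p` (`a < b`), under Lattimore–Segal probability weighting with
parameters `δ, γ`; degenerate lotteries get their certain payoff. -/
noncomputable def cptValue (δ γ a b p : ℝ) : ℝ :=
  if p = 0 then a
  else if p = 1 then b
  else (δ * (1 - p) ^ γ / (δ * (1 - p) ^ γ + p ^ γ)) * a +
       (δ * p ^ γ / (δ * p ^ γ + (1 - p) ^ γ)) * b

/-- CPT with subcertainty (`δ < 1`) can strictly prefer a first-order
stochastically dominated lottery: there are `δ ∈ (0,1)`, `γ ∈ (0,1)`, payoffs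
`a < b`, and probabilities `0 ≤ q < p ≤ 1` with `cptValue δ γ a b q > cptValue δ γ a b p`;
in particular this holds with `δ = 0.726`, `γ = 0.309`. -/
theorem stmt_15 :
    ∃ δ γ a b p q : ℝ,
      δ = 0.726 ∧ γ = 0.309 ∧
      0 < δ ∧ δ < 1 ∧ 0 < γ ∧ γ < 1 ∧ a < b ∧
      0 ≤ q ∧ q < p ∧ p ≤ 1 ∧
      cptValue δ γ a b p < cptValue δ γ a b q := by
  set p : ℝ := (1/2 : ℝ) ^ ((1000:ℝ)/309) with hp
  have hppos : 0 < p := Real.rpow_pos_of_pos (by norm_num) _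
  have hple : p ≤ 1/8 := by
    have h := Real.rpow_le_rpow_of_exponent_ge (x := (1/2:ℝ)) (by norm_num) (by norm_num)
      (show (3:ℝ) ≤ 1000/309 by norm_num)
    calc p ≤ (1/2:ℝ) ^ (3:ℝ) := h
      _ = 1/8 := by
        rw [show (3:ℝ) = ((3:ℕ):ℝ) by norm_num, Real.rpow_natCast]; norm_num
  have hpg : p ^ (0.309 : ℝ) = 1/2 := by
    rw [hp, ← Real.rpow_mul (by norm_num)]
    norm_num
  refine ⟨0.726, 0.309, 1, 1.1, p, 0, rfl, rfl, by norm_num, by norm_num, by norm_num,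
    by norm_num, by norm_num, le_refl 0, hppos, by linarith, ?_⟩
  have h0 : cptValue 0.726 0.309 1 1.1 0 = 1 := by simp [cptValue]
  rw [h0, cptValue, if_neg (by positivity), if_neg (by intro h; rw [h] at hple; norm_num at hple),
    hpg]
  set u : ℝ := (1 - p) ^ (0.309 : ℝ) with hu
  have hu1 : u ≤ 1 := Real.rpow_le_one (by linarith) (by linarith) (by norm_num)
  have hu2 : (7:ℝ)/8 ≤ u := by
    have h := Real.rpow_le_rpow_of_exponent_ge (x := 1 - p) (by linarith) (by linarith)
      (show (0.309:ℝ) ≤ 1 by norm_num)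
    rw [Real.rpow_one] at h
    linarith
  have hd1 : (0:ℝ) < 0.726 * u + 1/2 := by linarith
  have hd2 : (0:ℝ) < 0.726 * (1/2) + u := by linarith
  rw [div_mul_eq_mul_div, div_mul_eq_mul_div, div_add_div _ _ (ne_of_gt hd1) (ne_of_gt hd2),
    div_lt_one (by positivity)]
  nlinarith [sq_nonneg (u - 1), sq_nonneg u]
end
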